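/- Let u₁,…,uₙ and v₁,…,vₙ be two orthonormal bases of ℂⁿ. There exists a conjugation C on ℂⁿ and unimodular constants α₁,…,αₙ with C uᵢ = αᵢ vᵢ for all i if and only if ⟨uᵢ, vⱼ⟩ = αⱼ ᾱᵢ ⟨uⱼ, vᵢ⟩ holds for some unimodular α₁,…,αₙ and all 1 ≤ i, j ≤ n. -/

import Mathlib

open scoped ComplexConjugate
open Matrix

/-- Paper-convention inner product on ℂⁿ: ⟨x,y⟩ = ∑ xᵢ conj(yᵢ). -/
noncomputable def cinner {n : ℕ} (x y : Fin n → ℂ) : ℂ := ∑ i, x i * conj (y i)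

/-- A conjugation on ℂⁿ: a conjugate-linear isometric involution. -/
structure Conjugation (n : ℕ) where
  toFun : (Fin n → ℂ) → (Fin n → ℂ)
  map_add : ∀ x y, toFun (x + y) = toFun x + toFun y
  map_smul : ∀ (a : ℂ) (x), toFun (a • x) = conj a • toFun x
  isometric : ∀ x y, cinner (toFun x) (toFun y) = cinner y x
  involutive : ∀ x, toFun (toFun x) = x

/-- `T` is unitarily equivalent to a complex symmetric matrix. -/
def UECSM {n : ℕ} (T : Matrix (Fin n) (Fin n) ℂ) : Prop :=
  ∃ Q ∈ Matrix.unitaryGroup (Fin n) ℂ, (Qᴴ * T * Q)ᵀ = Qᴴ * T * Q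

/-!
A conjugation `C` makes `(x, y) ↦ ⟨x, C y⟩` a symmetric bilinear form; evaluated at `uᵢ, uⱼ` with
`C uᵢ = αᵢ vᵢ` this symmetry is exactly the `α`-condition. Conversely, given the condition, put
`C x = ∑ᵢ αᵢ ⟨uᵢ, x⟩ vᵢ`. This is conjugate-linear, sends `uⱼ` to `αⱼ vⱼ` and is isometric because
both bases are orthonormal; the condition says precisely that it also sends `vⱼ` to `αⱼ uⱼ`, so
`C² uⱼ = |αⱼ|² uⱼ = uⱼ` and `C` is an involution.
-/

def CinnerOrthonormal {n : ℕ} {ι : Type*} [DecidableEq ι] (u : ι → Fin n → ℂ) : Prop :=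
  ∀ i j, cinner (u i) (u j) = if i = j then 1 else 0

section cinner

variable {n : ℕ}

lemma cinner_conj_symm (x y : Fin n → ℂ) : conj (cinner x y) = cinner y x := by
  simp only [cinner, map_sum, map_mul, Complex.conj_conj, mul_comm]

lemma cinner_add_left (x y z : Fin n → ℂ) : cinner (x + y) z = cinner x z + cinner y z := by
  simp only [cinner, Pi.add_apply, add_mul, Finset.sum_add_distrib]

lemma cinner_smul_left (a : ℂ) (x y : Fin n → ℂ) : cinner (a • x) y = a * cinner x y := by
  simp only [cinner, Pi.smul_apply, smul_eq_mul, Finset.mul_sum, mul_assoc]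

lemma cinner_sum_left {ι : Type*} (s : Finset ι) (x : ι → Fin n → ℂ) (y : Fin n → ℂ) :
    cinner (∑ i ∈ s, x i) y = ∑ i ∈ s, cinner (x i) y := by
  simp only [cinner, Finset.sum_apply, Finset.sum_mul]
  exact Finset.sum_comm

lemma cinner_add_right (x y z : Fin n → ℂ) : cinner x (y + z) = cinner x y + cinner x z := by
  rw [← cinner_conj_symm, cinner_add_left, map_add, cinner_conj_symm, cinner_conj_symm]

lemma cinner_smul_right (a : ℂ) (x y : Fin n → ℂ) : cinner x (a • y) = conj a * cinner x y := by
  rw [← cinner_conj_symm, cinner_smul_left, map_mul, cinner_conj_symm]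

lemma cinner_sum_right {ι : Type*} (s : Finset ι) (x : Fin n → ℂ) (y : ι → Fin n → ℂ) :
    cinner x (∑ i ∈ s, y i) = ∑ i ∈ s, cinner x (y i) := by
  rw [← cinner_conj_symm, cinner_sum_left, map_sum]
  simp only [cinner_conj_symm]

end cinner

lemma mul_conj_eq_one_of_norm_eq_one {a : ℂ} (ha : ‖a‖ = 1) : a * conj a = 1 := by
  rw [Complex.mul_conj', ha]
  norm_num

lemma Conjugation.cinner_apply_comm {n : ℕ} (C : Conjugation n) (x y : Fin n → ℂ) :
    cinner x (C.toFun y) = cinner y (C.toFun x) := by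
  simpa only [C.involutive] using C.isometric (C.toFun x) y

section Orthonormal

variable {n : ℕ} {u : Fin n → Fin n → ℂ}

lemma CinnerOrthonormal.cinner_sum_smul {ι : Type*} [Fintype ι] [DecidableEq ι]
    {v : ι → Fin n → ℂ} (hv : CinnerOrthonormal v) (c d : ι → ℂ) :
    cinner (∑ i, c i • v i) (∑ i, d i • v i) = ∑ i, c i * conj (d i) := by
  simp only [cinner_sum_left, cinner_sum_right, cinner_smul_left, cinner_smul_right, hv _ _,
    mul_ite, mul_one, mul_zero, Finset.sum_ite_eq', Finset.mem_univ, if_true]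
  exact Finset.sum_congr rfl fun i _ => mul_comm _ _

lemma CinnerOrthonormal.mem_unitaryGroup (hu : CinnerOrthonormal u) :
    Matrix.of u ∈ Matrix.unitaryGroup (Fin n) ℂ := by
  rw [Matrix.mem_unitaryGroup_iff]
  ext i j
  simpa [Matrix.mul_apply, Matrix.one_apply, cinner] using hu i j

-- The expansion needs orthonormal columns; a square matrix with orthonormal rows has them.
lemma CinnerOrthonormal.sum_cinner_smul (hu : CinnerOrthonormal u) (x : Fin n → ℂ) :
    ∑ i, cinner x (u i) • u i = x := by
  have hcols : ∀ l k, ∑ i, conj (u i l) * u i k = if l = k then 1 else 0 := fun l k => by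
    simpa [Matrix.mul_apply, Matrix.one_apply] using
      congrFun (congrFun (Matrix.mem_unitaryGroup_iff'.mp hu.mem_unitaryGroup) l) k
  funext k
  calc (∑ i, cinner x (u i) • u i) k
      = ∑ l, x l * ∑ i, conj (u i l) * u i k := by
        simp only [Finset.sum_apply, Pi.smul_apply, smul_eq_mul, cinner, Finset.sum_mul,
          Finset.mul_sum, mul_assoc]
        exact Finset.sum_comm
    _ = x k := by simp [hcols]

end Orthonormal

section conjOfBases

variable {n : ℕ} {u v : Fin n → Fin n → ℂ} {α : Fin n → ℂ}

noncomputable def conjOfBases (u v : Fin n → Fin n → ℂ) (α : Fin n → ℂ) :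
    (Fin n → ℂ) →ₗ⋆[ℂ] (Fin n → ℂ) where
  toFun x := ∑ i, (α i * cinner (u i) x) • v i
  map_add' x y := by simp only [cinner_add_right, mul_add, add_smul, Finset.sum_add_distrib]
  map_smul' a x := by
    simp only [cinner_smul_right, Finset.smul_sum, smul_smul]
    exact Finset.sum_congr rfl fun i _ => by ring_nf

lemma conjOfBases_apply (x : Fin n → ℂ) :
    conjOfBases u v α x = ∑ i, (α i * cinner (u i) x) • v i := rfl

lemma conjOfBases_apply_left (hu : CinnerOrthonormal u) (j : Fin n) :
    conjOfBases u v α (u j) = α j • v j := by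
  simp only [conjOfBases_apply, hu _ _, mul_ite, mul_one, mul_zero, ite_smul, zero_smul,
    Finset.sum_ite_eq', Finset.mem_univ, if_true]

lemma conjOfBases_apply_right (hv : CinnerOrthonormal v) (hα : ∀ i, ‖α i‖ = 1)
    (hcond : ∀ i j, cinner (u i) (v j) = α j * conj (α i) * cinner (u j) (v i)) (j : Fin n) :
    conjOfBases u v α (v j) = α j • u j := by
  have hcoeff : ∀ i, α i * cinner (u i) (v j) = α j * cinner (u j) (v i) := fun i => by
    rw [hcond]
    linear_combination α j * cinner (u j) (v i) * mul_conj_eq_one_of_norm_eq_one (hα i)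
  simp only [conjOfBases_apply, hcoeff, ← smul_smul, ← Finset.smul_sum, hv.sum_cinner_smul]

lemma conjOfBases_conjOfBases (hu : CinnerOrthonormal u) (hv : CinnerOrthonormal v)
    (hα : ∀ i, ‖α i‖ = 1)
    (hcond : ∀ i j, cinner (u i) (v j) = α j * conj (α i) * cinner (u j) (v i))
    (x : Fin n → ℂ) : conjOfBases u v α (conjOfBases u v α x) = x := by
  conv_rhs => rw [← hu.sum_cinner_smul x]
  simp only [conjOfBases_apply (u := u) (v := v) (α := α) x, map_sum, map_smulₛₗ,
    conjOfBases_apply_right hv hα hcond, smul_smul, map_mul, cinner_conj_symm]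
  refine Finset.sum_congr rfl fun i _ => congrArg (· • u i) ?_
  linear_combination cinner x (u i) * mul_conj_eq_one_of_norm_eq_one (hα i)

lemma cinner_conjOfBases (hu : CinnerOrthonormal u) (hv : CinnerOrthonormal v)
    (hα : ∀ i, ‖α i‖ = 1) (x y : Fin n → ℂ) :
    cinner (conjOfBases u v α x) (conjOfBases u v α y) = cinner y x := by
  conv_rhs => rw [← hu.sum_cinner_smul x, ← hu.sum_cinner_smul y]
  rw [conjOfBases_apply, conjOfBases_apply, hv.cinner_sum_smul, hu.cinner_sum_smul]
  refine Finset.sum_congr rfl fun i _ => ?_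
  rw [map_mul, cinner_conj_symm, cinner_conj_symm]
  linear_combination cinner (u i) x * cinner y (u i) * mul_conj_eq_one_of_norm_eq_one (hα i)

end conjOfBases

noncomputable def Conjugation.ofBases {n : ℕ} {u v : Fin n → Fin n → ℂ} {α : Fin n → ℂ}
    (hu : CinnerOrthonormal u) (hv : CinnerOrthonormal v) (hα : ∀ i, ‖α i‖ = 1)
    (hcond : ∀ i j, cinner (u i) (v j) = α j * conj (α i) * cinner (u j) (v i)) :
    Conjugation n where
  toFun := conjOfBases u v α
  map_add := _root_.map_add _
  map_smul := LinearMap.map_smulₛₗ _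
  isometric := cinner_conjOfBases hu hv hα
  involutive := conjOfBases_conjOfBases hu hv hα hcond

lemma Conjugation.cinner_eq_of_apply_eq_smul {n : ℕ} (C : Conjugation n)
    {u v : Fin n → Fin n → ℂ} {α : Fin n → ℂ} (hα : ∀ i, ‖α i‖ = 1)
    (hC : ∀ i, C.toFun (u i) = α i • v i) (i j : Fin n) :
    cinner (u i) (v j) = α j * conj (α i) * cinner (u j) (v i) := by
  have hv : v j = conj (α j) • C.toFun (u j) := by
    rw [hC, smul_smul, mul_comm, mul_conj_eq_one_of_norm_eq_one (hα j), one_smul]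
  calc cinner (u i) (v j)
      = α j * cinner (u i) (C.toFun (u j)) := by rw [hv, cinner_smul_right, Complex.conj_conj]
    _ = α j * cinner (u j) (C.toFun (u i)) := by rw [C.cinner_apply_comm]
    _ = α j * conj (α i) * cinner (u j) (v i) := by rw [hC, cinner_smul_right, mul_assoc]

theorem exists_conjugation_iff_alpha_condition {n : ℕ} (u v : Fin n → (Fin n → ℂ))
    (hu : ∀ i j, cinner (u i) (u j) = if i = j then 1 else 0)
    (hv : ∀ i j, cinner (v i) (v j) = if i = j then 1 else 0) :
    (∃ (C : Conjugation n) (α : Fin n → ℂ), (∀ i, ‖α i‖ = 1) ∧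
        ∀ i, C.toFun (u i) = α i • v i) ↔
      (∃ α : Fin n → ℂ, (∀ i, ‖α i‖ = 1) ∧
        ∀ i j, cinner (u i) (v j) = α j * conj (α i) * cinner (u j) (v i)) := by
  constructor
  · rintro ⟨C, α, hα, hC⟩
    exact ⟨α, hα, C.cinner_eq_of_apply_eq_smul hα hC⟩
  · rintro ⟨α, hα, hcond⟩
    exact ⟨.ofBases hu hv hα hcond, α, hα, conjOfBases_apply_left (v := v) hu⟩
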